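/- Let (a_j)_{j=0}^∞ be a sequence of complex numbers with |a_j| = 1 for all j, and for each n ≥ 0 let P_n(z) = Σ_{j=0}^n a_j z^j. Then the sequence (P_n) is not ultraflat; that is, it is NOT the case that sup_{t ∈ ℝ} | |P_n(e^{it})|/√(n+1) − 1 | tends to 0 as n → ∞. -/

import Mathlib

open Filter Finset Complex Metric Polynomial
open scoped Classical

namespace UF

lemma circleMap_eq (t : ℝ) : circleMap 0 1 t = Complex.exp (t * I) := by
  simp [circleMap]

lemma prod_deriv (c z : ℂ) : ∀ (s : Multiset ℂ), (∀ r ∈ s, z ≠ r) →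
    HasDerivAt (fun w => c * (s.map fun r => w - r).prod)
      ((c * (s.map fun r => z - r).prod) * (s.map fun r => (z - r)⁻¹).sum) z := by
  intro s
  induction s using Multiset.induction_on with
  | empty => simpa using hasDerivAt_const z c
  | cons a t ih =>
    intro hz
    have hza : z ≠ a := hz a (Multiset.mem_cons_self a t)
    have iht := ih (fun r hr => hz r (Multiset.mem_cons_of_mem hr))
    have h1 : HasDerivAt (fun w : ℂ => w - a) 1 z := (hasDerivAt_id z).sub_const a
    have h2 := h1.mul iht
    have heq : (fun w : ℂ => c * ((a ::ₘ t).map fun r => w - r).prod)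
        = fun w => (w - a) * (c * (t.map fun r => w - r).prod) := by
      funext w
      simp only [Multiset.map_cons, Multiset.prod_cons]
      ring
    rw [heq]
    simp only [Multiset.map_cons, Multiset.prod_cons, Multiset.sum_cons]
    have : z - a ≠ 0 := sub_ne_zero.mpr hza
    exact h2.congr_deriv (by
      linear_combination -(c * (t.map fun r => z - r).prod) * mul_inv_cancel₀ this)

lemma cont_inv (r : ℂ) (hr : ‖r‖ ≠ 1) :
    Continuous fun t : ℝ => (circleMap 0 1 t - r)⁻¹ := by
  apply Continuous.inv₀ ((continuous_circleMap 0 1).sub continuous_const)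
  intro t h
  apply hr
  have : circleMap 0 1 t = r := sub_eq_zero.mp h
  rw [← this]
  simpa using Complex.abs_circleMap_zero 1 t

lemma cont_sum : ∀ (s : Multiset ℂ), (∀ r ∈ s, ‖r‖ ≠ 1) →
    Continuous fun t : ℝ => (s.map fun r => (circleMap 0 1 t - r)⁻¹).sum := by
  intro s
  induction s using Multiset.induction_on with
  | empty =>
    intro _
    simpa using continuous_const
  | cons a t ih =>
    intro hs
    simp only [Multiset.map_cons, Multiset.sum_cons]
    exact (cont_inv a (hs a (Multiset.mem_cons_self a t))).add
      (ih fun r hr => hs r (Multiset.mem_cons_of_mem hr))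

lemma circle_term_integral (r : ℂ) (hr : ‖r‖ ≠ 1) :
    (∫ t in (0:ℝ)..(2*Real.pi), (circleMap 0 1 t * I) * (circleMap 0 1 t - r)⁻¹)
      = if ‖r‖ < 1 then 2*Real.pi*I else 0 := by
  have hcirc : (∫ t in (0:ℝ)..(2*Real.pi), (circleMap 0 1 t * I) * (circleMap 0 1 t - r)⁻¹)
      = ∮ z in C(0, 1), (z - r)⁻¹ := by
    simp only [circleIntegral, deriv_circleMap, smul_eq_mul]
  rw [hcirc]
  by_cases h : ‖r‖ < 1
  · rw [if_pos h]
    exact circleIntegral.integral_sub_inv_of_mem_ball (by simpa using h)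
  · rw [if_neg h]
    have hr1 : 1 < ‖r‖ := lt_of_le_of_ne (not_lt.mp h) (Ne.symm hr)
    apply circleIntegral_eq_zero_of_differentiable_on_off_countable zero_le_one
      Set.countable_empty
    · intro z hz
      have : z ≠ r := by
        intro h'; subst h'
        exact absurd (mem_closedBall_zero_iff.mp hz) (not_le.mpr hr1)
      exact ((continuousAt_id.sub continuousAt_const).inv₀
        (sub_ne_zero.mpr this)).continuousWithinAt
    · intro z hz
      have : z ≠ r := by
        intro h'; subst h'
        exact absurd (le_of_lt (mem_ball_zero_iff.mp hz.1)) (not_le.mpr hr1)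
      exact (differentiableAt_id.sub_const r).inv (sub_ne_zero.mpr this)

lemma integral_logderiv : ∀ (s : Multiset ℂ), (∀ r ∈ s, ‖r‖ ≠ 1) →
    (∫ t in (0:ℝ)..(2*Real.pi),
        (circleMap 0 1 t * I) * (s.map fun r => (circleMap 0 1 t - r)⁻¹).sum)
      = (Multiset.card (s.filter fun r => ‖r‖ < 1) : ℂ) * (2*Real.pi*I) := by
  intro s
  induction s using Multiset.induction_on with
  | empty => simp
  | cons a t ih =>
    intro hs
    have ha' : ‖a‖ ≠ 1 := hs a (Multiset.mem_cons_self a t)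
    have ht' : ∀ r ∈ t, ‖r‖ ≠ 1 := fun r hr => hs r (Multiset.mem_cons_of_mem hr)
    have c1 : Continuous fun θ : ℝ => (circleMap 0 1 θ * I) * (circleMap 0 1 θ - a)⁻¹ :=
      ((continuous_circleMap 0 1).mul continuous_const).mul (cont_inv a ha')
    have c2 : Continuous fun θ : ℝ =>
        (circleMap 0 1 θ * I) * (t.map fun r => (circleMap 0 1 θ - r)⁻¹).sum :=
      ((continuous_circleMap 0 1).mul continuous_const).mul (cont_sum t ht')
    have heq : (fun θ : ℝ => (circleMap 0 1 θ * I) *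
          ((a ::ₘ t).map fun r => (circleMap 0 1 θ - r)⁻¹).sum)
        = fun θ => (circleMap 0 1 θ * I) * (circleMap 0 1 θ - a)⁻¹
            + (circleMap 0 1 θ * I) * (t.map fun r => (circleMap 0 1 θ - r)⁻¹).sum := by
      funext θ
      simp only [Multiset.map_cons, Multiset.sum_cons]
      ring
    rw [heq, intervalIntegral.integral_add (c1.intervalIntegrable _ _) (c2.intervalIntegrable _ _),
      circle_term_integral a ha', ih ht']
    by_cases h : ‖a‖ < 1
    · rw [if_pos h, show Multiset.filter (fun r => ‖r‖ < 1) (a ::ₘ t)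
          = a ::ₘ Multiset.filter (fun r => ‖r‖ < 1) t from Multiset.filter_cons_of_pos _ h]
      simp only [Multiset.card_cons]
      push_cast
      ring
    · rw [if_neg h, show Multiset.filter (fun r => ‖r‖ < 1) (a ::ₘ t)
          = Multiset.filter (fun r => ‖r‖ < 1) t from Multiset.filter_cons_of_neg _ h]
      ring

lemma multiset_prod_le_pow (b : ℝ) (hb0 : 0 ≤ b) : ∀ (s : Multiset ℝ),
    (∀ x ∈ s, 0 ≤ x) → (∀ x ∈ s, x ≤ b) → s.prod ≤ b ^ Multiset.card s := by
  intro s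
  induction s using Multiset.induction_on with
  | empty => simp
  | cons a t ih =>
    intro h0 hb
    have h0t : ∀ x ∈ t, (0:ℝ) ≤ x := fun x hx => h0 x (Multiset.mem_cons_of_mem hx)
    have htp : (0:ℝ) ≤ t.prod := Multiset.prod_nonneg h0t
    simp only [Multiset.prod_cons, Multiset.card_cons, pow_succ]
    rw [mul_comm (b ^ Multiset.card t) b]
    exact mul_le_mul (hb a (Multiset.mem_cons_self a t))
      (ih h0t (fun x hx => hb x (Multiset.mem_cons_of_mem hx))) htp hb0

lemma pow_le_multiset_prod (b : ℝ) (hb0 : 0 ≤ b) : ∀ (s : Multiset ℝ),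
    (∀ x ∈ s, b ≤ x) → b ^ Multiset.card s ≤ s.prod := by
  intro s
  induction s using Multiset.induction_on with
  | empty => simp
  | cons a t ih =>
    intro hb
    have hbt : ∀ x ∈ t, b ≤ x := fun x hx => hb x (Multiset.mem_cons_of_mem hx)
    simp only [Multiset.prod_cons, Multiset.card_cons, pow_succ]
    rw [mul_comm (b ^ Multiset.card t) b]
    exact mul_le_mul (hb a (Multiset.mem_cons_self a t)) (ih hbt)
      (pow_nonneg hb0 _) (hb0.trans (hb a (Multiset.mem_cons_self a t)))

lemma norm_cprod (c : ℂ) (s : Multiset ℂ) (z : ℂ) :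
    ‖c * (s.map fun r => z - r).prod‖ = ‖c‖ * (s.map fun r => ‖z - r‖).prod := by
  rw [norm_mul]
  congr 1
  rw [show ‖(s.map fun r => z - r).prod‖ = normHom (s.map fun r => z - r).prod from rfl,
    map_multiset_prod, Multiset.map_map]
  congr 1

lemma diff_prod (c : ℂ) (s : Multiset ℂ) :
    Differentiable ℂ fun z => c * (s.map fun r => z - r).prod := by
  have h : (fun z => c * (s.map fun r => z - r).prod)
      = fun z => (Polynomial.C c * (s.map fun r => Polynomial.X - Polynomial.C r).prod).eval z := by
    funext z
    rw [Polynomial.eval_mul, Polynomial.eval_C, Polynomial.eval_multiset_prod, Multiset.map_map]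
    exact congrArg (fun u => c * u)
      (congrArg Multiset.prod (Multiset.map_congr rfl fun r _ => by simp))
  rw [h]
  exact Polynomial.differentiable _

lemma growth (c : ℂ) (hc : ‖c‖ = 1) (s : Multiset ℂ) (h1 : ∀ r ∈ s, ‖r‖ ≠ 1)
    (hhalf : ∀ r ∈ s, (1:ℝ)/2 ≤ ‖r‖) (hprod : (s.map fun r => ‖r‖).prod ≤ 1) (m : ℝ)
    (hm : ∀ z : ℂ, ‖z‖ = 1 → m ≤ ‖c * (s.map fun r => z - r).prod‖) :
    m ≤ 4 ^ Multiset.card (s.filter fun r => ‖r‖ < 1) := by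
  set sIn := s.filter (fun r => ‖r‖ < 1) with hsIn
  set sOut := s.filter (fun r => ¬ ‖r‖ < 1) with hsOut
  set W := Multiset.card sIn with hWdef
  rcases le_or_gt m 0 with hm0 | hm0
  · exact hm0.trans (by positivity)
  have hsplit : sIn + sOut = s := Multiset.filter_add_not _ s
  have hOutmem : ∀ r ∈ sOut, r ∈ s := fun r hr => Multiset.mem_of_mem_filter hr
  have hOutgt : ∀ r ∈ sOut, 1 < ‖r‖ := by
    intro r hr
    have h2 := (Multiset.mem_filter.mp hr).2
    exact lt_of_le_of_ne (not_lt.mp h2) (Ne.symm (h1 r (hOutmem r hr)))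
  set g : ℂ → ℂ := fun z => c * (sOut.map fun r => z - r).prod with hg
  have hgne : ∀ z : ℂ, ‖z‖ ≤ 1 → g z ≠ 0 := by
    intro z hz
    simp only [hg]
    apply mul_ne_zero
    · intro h; rw [h] at hc; simp at hc
    · apply Multiset.prod_ne_zero
      intro h0
      obtain ⟨r, hr, hr0⟩ := Multiset.mem_map.mp h0
      have hzr : z = r := sub_eq_zero.mp hr0
      exact absurd (hzr ▸ hz) (not_le.mpr (hOutgt r hr))
  have hWpos : (0:ℝ) < 2 ^ W := by positivity
  have hglow : ∀ z : ℂ, ‖z‖ = 1 → m / 2 ^ W ≤ ‖g z‖ := by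
    intro z hz
    have hsplitnorm : ‖c * (s.map fun r => z - r).prod‖
        = (sIn.map fun r => ‖z - r‖).prod * ((sOut.map fun r => ‖z - r‖).prod) := by
      rw [norm_cprod, hc, one_mul, ← hsplit, Multiset.map_add, Multiset.prod_add]
    have hInle : (sIn.map fun r => ‖z - r‖).prod ≤ 2 ^ W := by
      have h := multiset_prod_le_pow 2 (by norm_num) (sIn.map fun r => ‖z - r‖)
        (by intro x hx; obtain ⟨r, hr, rfl⟩ := Multiset.mem_map.mp hx; positivity)
        (by intro x hx
            obtain ⟨r, hr, rfl⟩ := Multiset.mem_map.mp hx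
            have hrlt : ‖r‖ < 1 := (Multiset.mem_filter.mp hr).2
            calc ‖z - r‖ ≤ ‖z‖ + ‖r‖ := norm_sub_le z r
            _ ≤ 2 := by rw [hz]; linarith)
      simpa [Multiset.card_map] using h
    have hgz : ‖g z‖ = (sOut.map fun r => ‖z - r‖).prod := by
      rw [hg, norm_cprod, hc, one_mul]
    have hq := hm z hz
    rw [hsplitnorm] at hq
    have hgz0 : 0 ≤ ‖g z‖ := norm_nonneg _
    rw [div_le_iff₀ hWpos]
    calc m ≤ (sIn.map fun r => ‖z - r‖).prod * (sOut.map fun r => ‖z - r‖).prod := hq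
    _ ≤ 2 ^ W * (sOut.map fun r => ‖z - r‖).prod := by
        apply mul_le_mul_of_nonneg_right hInle
        rw [← hgz]; exact hgz0
    _ = ‖g z‖ * 2 ^ W := by rw [hgz]; ring
  have hdc : DiffContOnCl ℂ (fun z => (g z)⁻¹) (ball (0:ℂ) 1) := by
    apply DifferentiableOn.diffContOnCl
    rw [closure_ball (0:ℂ) one_ne_zero]
    intro z hz
    exact (((diff_prod c sOut) z).inv
      (hgne z (mem_closedBall_zero_iff.mp hz))).differentiableWithinAt
  have hfr : ∀ z ∈ frontier (ball (0:ℂ) 1), ‖(g z)⁻¹‖ ≤ (m / 2 ^ W)⁻¹ := by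
    intro z hz
    rw [frontier_ball (0:ℂ) one_ne_zero] at hz
    have hz1 : ‖z‖ = 1 := by simpa using hz
    rw [norm_inv]
    exact inv_anti₀ (div_pos hm0 hWpos) (hglow z hz1)
  have h0mem : (0:ℂ) ∈ closure (ball (0:ℂ) 1) := by
    rw [closure_ball (0:ℂ) one_ne_zero]; simp
  have hmax := Complex.norm_le_of_forall_mem_frontier_norm_le isBounded_ball hdc hfr h0mem
  have hg0pos : 0 < ‖g 0‖ := norm_pos_iff.mpr (hgne 0 (by simp))
  have hlow0 : m / 2 ^ W ≤ ‖g 0‖ := by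
    rw [norm_inv, inv_le_inv₀ hg0pos (div_pos hm0 hWpos)] at hmax
    exact hmax
  have hg0eq : ‖g 0‖ = (sOut.map fun r => ‖r‖).prod := by
    rw [hg, norm_cprod, hc, one_mul]
    congr 1
    exact Multiset.map_congr rfl fun r _ => by simp
  have hInlow : ((1:ℝ)/2) ^ W ≤ (sIn.map fun r => ‖r‖).prod := by
    have h := pow_le_multiset_prod (1/2) (by norm_num) (sIn.map fun r => ‖r‖)
      (by intro x hx
          obtain ⟨r, hr, rfl⟩ := Multiset.mem_map.mp hx
          exact hhalf r (Multiset.mem_of_mem_filter hr))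
    simpa [Multiset.card_map] using h
  have hOutNonneg : 0 ≤ (sOut.map fun r => ‖r‖).prod :=
    Multiset.prod_nonneg (by
      intro x hx
      obtain ⟨r, hr, rfl⟩ := Multiset.mem_map.mp hx
      exact norm_nonneg r)
  have hsum : (sIn.map fun r => ‖r‖).prod * (sOut.map fun r => ‖r‖).prod ≤ 1 := by
    rw [← Multiset.prod_add, ← Multiset.map_add, hsplit]
    exact hprod
  have hpow : ((1:ℝ)/2)^W * 2^W = 1 := by rw [← mul_pow]; norm_num
  have h1' : ((1:ℝ)/2)^W * (sOut.map fun r => ‖r‖).prod ≤ 1 :=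
    le_trans (mul_le_mul_of_nonneg_right hInlow hOutNonneg) hsum
  have hg0le : ‖g 0‖ ≤ 2 ^ W := by
    rw [hg0eq]
    calc (sOut.map fun r => ‖r‖).prod
        = ((1:ℝ)/2)^W * (sOut.map fun r => ‖r‖).prod * 2^W := by
          rw [mul_comm (((1:ℝ)/2)^W) _, mul_assoc, hpow, mul_one]
      _ ≤ 1 * 2^W := mul_le_mul_of_nonneg_right h1' (le_of_lt hWpos)
      _ = 2^W := one_mul _
  have hfin : m / 2^W ≤ 2^W := hlow0.trans hg0le
  calc m = m / 2^W * 2^W := by field_simp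
  _ ≤ 2^W * 2^W := mul_le_mul_of_nonneg_right hfin (le_of_lt hWpos)
  _ = 4^W := by rw [← mul_pow]; norm_num

lemma winding_eq (c0 c1 : ℂ) (s0 s1 : Multiset ℂ)
    (h0 : ∀ r ∈ s0, ‖r‖ ≠ 1) (h1 : ∀ r ∈ s1, ‖r‖ ≠ 1)
    (hclose : ∀ z : ℂ, ‖z‖ = 1 →
        ‖c1 * (s1.map fun r => z - r).prod - c0 * (s0.map fun r => z - r).prod‖
          < ‖c0 * (s0.map fun r => z - r).prod‖) :
    Multiset.card (s1.filter fun r => ‖r‖ < 1)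
      = Multiset.card (s0.filter fun r => ‖r‖ < 1) := by
  set q0 : ℂ → ℂ := fun z => c0 * (s0.map fun r => z - r).prod with hq0
  set q1 : ℂ → ℂ := fun z => c1 * (s1.map fun r => z - r).prod with hq1
  have hq0ne : ∀ z : ℂ, ‖z‖ = 1 → q0 z ≠ 0 := by
    intro z hz h
    have hcl := hclose z hz
    rw [show c0 * (s0.map fun r => z - r).prod = q0 z from rfl, h] at hcl
    simp at hcl
    exact absurd hcl (not_lt.mpr (by positivity))
  have hq1ne : ∀ z : ℂ, ‖z‖ = 1 → q1 z ≠ 0 := by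
    intro z hz h
    have hcl := hclose z hz
    rw [show c1 * (s1.map fun r => z - r).prod = q1 z from rfl, h,
      show c0 * (s0.map fun r => z - r).prod = q0 z from rfl, zero_sub, norm_neg] at hcl
    exact lt_irrefl _ hcl
  have hnr0 : ∀ z : ℂ, ‖z‖ = 1 → ∀ r ∈ s0, z ≠ r := fun z hz r hr he => h0 r hr (he ▸ hz)
  have hnr1 : ∀ z : ℂ, ‖z‖ = 1 → ∀ r ∈ s1, z ≠ r := fun z hz r hr he => h1 r hr (he ▸ hz)
  have hslit : ∀ z : ℂ, ‖z‖ = 1 → q1 z / q0 z ∈ Complex.slitPlane := by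
    intro z hz
    have h' : q1 z / q0 z = 1 + (q1 z - q0 z) / q0 z := by
      field_simp [hq0ne z hz]
      ring
    rw [h']
    apply Complex.mem_slitPlane_of_norm_lt_one
    rw [norm_div, div_lt_one (norm_pos_iff.mpr (hq0ne z hz))]
    exact hclose z hz
  have key : ∀ t : ℝ, HasDerivAt
      (fun u : ℝ => Complex.log (q1 (circleMap 0 1 u) / q0 (circleMap 0 1 u)))
      ((circleMap 0 1 t * I) *
        ((s1.map fun r => (circleMap 0 1 t - r)⁻¹).sum
          - (s0.map fun r => (circleMap 0 1 t - r)⁻¹).sum)) t := by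
    intro t
    have hfun : (fun u : ℝ => Complex.log (q1 (circleMap 0 1 u) / q0 (circleMap 0 1 u)))
        = fun u : ℝ => Complex.log (q1 (Complex.exp (u * I)) / q0 (Complex.exp (u * I))) := by
      funext u; rw [circleMap_eq]
    rw [hfun, circleMap_eq]
    set z : ℂ := Complex.exp ((t : ℂ) * I) with hzdef
    have hz : ‖z‖ = 1 := by
      rw [hzdef]
      exact Complex.norm_exp_ofReal_mul_I t
    have dE : HasDerivAt (fun w : ℂ => Complex.exp (w * I)) (z * I) (t : ℂ) := by
      have hlin : HasDerivAt (fun w : ℂ => w * I) I (t : ℂ) := by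
        simpa using (hasDerivAt_id (t : ℂ)).mul_const I
      have h := (Complex.hasDerivAt_exp ((t : ℂ) * I)).comp (t : ℂ) hlin
      simpa [hzdef, Function.comp_def] using h
    have d0 : HasDerivAt q0 (q0 z * (s0.map fun r => (z - r)⁻¹).sum) z :=
      prod_deriv c0 z s0 (hnr0 z hz)
    have d1 : HasDerivAt q1 (q1 z * (s1.map fun r => (z - r)⁻¹).sum) z :=
      prod_deriv c1 z s1 (hnr1 z hz)
    have dq := d1.div d0 (hq0ne z hz)
    have dcomp := dq.comp (t : ℂ) dE
    have dlog := (Complex.hasDerivAt_log (hslit z hz)).comp (t : ℂ) dcomp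
    have dreal := dlog.comp_ofReal
    refine dreal.congr_deriv ?_
    have h0' : q0 z ≠ 0 := hq0ne z hz
    have h1' : q1 z ≠ 0 := hq1ne z hz
    field_simp
  have cont1 : Continuous fun t : ℝ =>
      (circleMap 0 1 t * I) * (s1.map fun r => (circleMap 0 1 t - r)⁻¹).sum :=
    ((continuous_circleMap 0 1).mul continuous_const).mul (cont_sum s1 h1)
  have cont0 : Continuous fun t : ℝ =>
      (circleMap 0 1 t * I) * (s0.map fun r => (circleMap 0 1 t - r)⁻¹).sum :=
    ((continuous_circleMap 0 1).mul continuous_const).mul (cont_sum s0 h0)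
  have hcont : Continuous fun t : ℝ => (circleMap 0 1 t * I) *
      ((s1.map fun r => (circleMap 0 1 t - r)⁻¹).sum
        - (s0.map fun r => (circleMap 0 1 t - r)⁻¹).sum) :=
    ((continuous_circleMap 0 1).mul continuous_const).mul
      ((cont_sum s1 h1).sub (cont_sum s0 h0))
  have hint := intervalIntegral.integral_eq_sub_of_hasDerivAt
      (f := fun u : ℝ => Complex.log (q1 (circleMap 0 1 u) / q0 (circleMap 0 1 u)))
      (a := 0) (b := 2*Real.pi)
      (fun t _ => key t) (hcont.intervalIntegrable _ _)
  have hper : circleMap 0 1 (2*Real.pi) = circleMap 0 1 0 := by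
    rw [circleMap_eq, circleMap_eq]
    push_cast
    rw [Complex.exp_two_pi_mul_I]
    simp
  beta_reduce at hint
  rw [hper, sub_self] at hint
  have hsplitInt : (∫ t in (0:ℝ)..(2*Real.pi), (circleMap 0 1 t * I) *
      ((s1.map fun r => (circleMap 0 1 t - r)⁻¹).sum
        - (s0.map fun r => (circleMap 0 1 t - r)⁻¹).sum))
      = (∫ t in (0:ℝ)..(2*Real.pi),
          (circleMap 0 1 t * I) * (s1.map fun r => (circleMap 0 1 t - r)⁻¹).sum)
        - ∫ t in (0:ℝ)..(2*Real.pi),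
          (circleMap 0 1 t * I) * (s0.map fun r => (circleMap 0 1 t - r)⁻¹).sum := by
    rw [← intervalIntegral.integral_sub (cont1.intervalIntegrable _ _)
      (cont0.intervalIntegrable _ _)]
    congr 1
    funext t
    ring
  rw [hsplitInt, integral_logderiv s1 h1, integral_logderiv s0 h0] at hint
  have h2pi : (2*(Real.pi:ℂ)*I : ℂ) ≠ 0 := by
    simp [Real.pi_ne_zero, Complex.I_ne_zero]
  have hc := sub_eq_zero.mp hint
  exact_mod_cast mul_right_cancel₀ h2pi hc

lemma geom_half (n : ℕ) : ∑ i ∈ Finset.range n, ((1:ℝ)/2)^i ≤ 2 := by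
  have h : ∀ m : ℕ, ∑ i ∈ Finset.range m, ((1:ℝ)/2)^i = 2 - 2*((1:ℝ)/2)^m := by
    intro m
    induction m with
    | zero => simp
    | succ k ih =>
      rw [Finset.sum_range_succ, ih, pow_succ]
      ring
  rw [h n]
  have : (0:ℝ) ≤ ((1:ℝ)/2)^n := by positivity
  linarith

lemma root_half (a : ℕ → ℂ) (ha : ∀ j, ‖a j‖ = 1) (n : ℕ) (r : ℂ)
    (hr : (∑ j ∈ Finset.range (n+1), a j * r ^ j) = 0) : (1:ℝ)/2 ≤ ‖r‖ := by
  by_cases hx : (1:ℝ)/2 ≤ ‖r‖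
  · exact hx
  push_neg at hx
  exfalso
  have hsum : a 0 = -∑ i ∈ Finset.range n, a (i+1) * r^(i+1) := by
    have h := hr
    rw [Finset.sum_range_succ'] at h
    simp only [pow_zero, mul_one] at h
    linear_combination h
  have h1 : (1:ℝ) = ‖a 0‖ := (ha 0).symm
  have h2 : ‖a 0‖ ≤ ∑ i ∈ Finset.range n, ‖r‖^(i+1) := by
    rw [hsum, norm_neg]
    refine le_trans (norm_sum_le _ _) ?_
    apply Finset.sum_le_sum
    intro i _
    rw [norm_mul, norm_pow, ha (i+1), one_mul]
  have h3 : ∑ i ∈ Finset.range n, ‖r‖^(i+1) ≤ ‖r‖ * 2 := by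
    have heq : ∑ i ∈ Finset.range n, ‖r‖^(i+1) = ‖r‖ * ∑ i ∈ Finset.range n, ‖r‖^i := by
      rw [Finset.mul_sum]
      apply Finset.sum_congr rfl
      intro i _
      ring
    rw [heq]
    apply mul_le_mul_of_nonneg_left _ (norm_nonneg r)
    refine le_trans (Finset.sum_le_sum fun i _ => ?_) (geom_half n)
    exact pow_le_pow_left₀ (norm_nonneg r) (le_of_lt hx) i
  have : (1:ℝ) ≤ ‖r‖ * 2 := by rw [h1]; exact h2.trans h3
  linarith

end UF

open UF in
/-- If `(a j)` is a sequence of unimodular complex numbers and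
`P n z = ∑_{j=0}^n a j * z^j` are the partial sums, then the sequence `(P n)`
is not ultraflat: it is not the case that
`sup_{t ∈ ℝ} | ‖P n (e^{it})‖ / √(n+1) − 1 |  →  0` as `n → ∞`. -/
theorem partial_sums_not_ultraflat (a : ℕ → ℂ) (ha : ∀ j, ‖a j‖ = 1) :
    ¬ Tendsto
        (fun n : ℕ => ⨆ t : ℝ,
          |‖∑ j ∈ Finset.range (n + 1), a j * Complex.exp (t * Complex.I) ^ j‖ /
              Real.sqrt (n + 1) - 1|)
        atTop (nhds 0) := by
  intro h
  have ha0 : ∀ j, a j ≠ 0 := by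
    intro j hj
    have := ha j
    rw [hj] at this
    simp at this
  -- the polynomials
  set p : ℕ → Polynomial ℂ := fun n => ∑ j ∈ Finset.range (n+1), Polynomial.C (a j) * Polynomial.X ^ j with hp
  have heval : ∀ n (z : ℂ), (p n).eval z = ∑ j ∈ Finset.range (n+1), a j * z ^ j := by
    intro n z
    simp [hp, Polynomial.eval_finset_sum]
  have hcoeff : ∀ n k, (p n).coeff k = if k ≤ n then a k else 0 := by
    intro n k
    simp only [hp, Polynomial.finset_sum_coeff, Polynomial.coeff_C_mul, Polynomial.coeff_X_pow,
      mul_ite, mul_one, mul_zero]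
    rw [Finset.sum_ite_eq (Finset.range (n+1)) k a]
    simp [Nat.lt_succ_iff]
  have hpne : ∀ n, p n ≠ 0 := by
    intro n hn
    have h1 := hcoeff n n
    rw [hn] at h1
    simp at h1
    exact ha0 n h1.symm
  have hdeg : ∀ n, (p n).natDegree = n := by
    intro n
    apply le_antisymm
    · rw [Polynomial.natDegree_le_iff_coeff_eq_zero]
      intro m hm
      rw [hcoeff]
      rw [if_neg (by omega)]
    · apply Polynomial.le_natDegree_of_ne_zero
      rw [hcoeff, if_pos (le_refl n)]
      exact ha0 n
  have hcard : ∀ n, Multiset.card (p n).roots = (p n).natDegree :=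
    fun n => Polynomial.splits_iff_card_roots.mp (IsAlgClosed.splits (p n))
  have hleadc : ∀ n, (p n).leadingCoeff = a n := by
    intro n
    rw [Polynomial.leadingCoeff, hdeg, hcoeff, if_pos (le_refl n)]
  have hfac : ∀ n (z : ℂ), (p n).eval z = a n * ((p n).roots.map fun r => z - r).prod := by
    intro n z
    conv_lhs => rw [← Polynomial.C_leadingCoeff_mul_prod_multiset_X_sub_C (hcard n)]
    rw [Polynomial.eval_mul, Polynomial.eval_C, hleadc, Polynomial.eval_multiset_prod,
      Multiset.map_map]
    exact congrArg (fun u => a n * u)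
      (congrArg Multiset.prod (Multiset.map_congr rfl fun r _ => by simp))
  have hrootsum : ∀ n (r : ℂ), r ∈ (p n).roots →
      (∑ j ∈ Finset.range (n+1), a j * r ^ j) = 0 := by
    intro n r hr
    have h1 := (Polynomial.mem_roots'.mp hr).2
    rw [Polynomial.IsRoot, heval] at h1
    exact h1
  have hhalf : ∀ n (r : ℂ), r ∈ (p n).roots → (1:ℝ)/2 ≤ ‖r‖ :=
    fun n r hr => root_half a ha n r (hrootsum n r hr)
  -- from the ultraflatness assumption
  obtain ⟨N0, hN0⟩ := Metric.tendsto_atTop.mp h (1/2) (by norm_num)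
  have hub : ∀ n (t : ℝ), ‖∑ j ∈ Finset.range (n + 1), a j * Complex.exp (t * Complex.I) ^ j‖
      ≤ (n:ℝ) + 1 := by
    intro n t
    refine le_trans (norm_sum_le _ _) ?_
    have h1 : ∀ j ∈ Finset.range (n+1), ‖a j * Complex.exp (t * Complex.I) ^ j‖ = 1 := by
      intro j _
      rw [norm_mul, norm_pow, ha j, Complex.norm_exp_ofReal_mul_I]
      simp
    rw [Finset.sum_congr rfl h1]
    simp
  have hbdd : ∀ n, BddAbove (Set.range fun t : ℝ =>
      |‖∑ j ∈ Finset.range (n + 1), a j * Complex.exp (t * Complex.I) ^ j‖ /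
        Real.sqrt (n + 1) - 1|) := by
    intro n
    refine ⟨((n:ℝ)+1) / Real.sqrt (n+1) + 1, ?_⟩
    rintro x ⟨t, rfl⟩
    beta_reduce
    have h1 : 0 ≤ ‖∑ j ∈ Finset.range (n + 1), a j * Complex.exp (t * Complex.I) ^ j‖ /
        Real.sqrt (n + 1) := by positivity
    have h2 : ‖∑ j ∈ Finset.range (n + 1), a j * Complex.exp (t * Complex.I) ^ j‖ /
        Real.sqrt (n + 1) ≤ ((n:ℝ)+1) / Real.sqrt (n+1) := by
      gcongr
      exact hub n t
    rw [abs_sub_comm]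
    calc |1 - ‖∑ j ∈ Finset.range (n + 1), a j * Complex.exp (t * Complex.I) ^ j‖ /
        Real.sqrt (n + 1)| ≤ 1 + ‖∑ j ∈ Finset.range (n + 1),
          a j * Complex.exp (t * Complex.I) ^ j‖ / Real.sqrt (n + 1) := by
          rw [abs_le]
          constructor <;> nlinarith
    _ ≤ ((n:ℝ)+1) / Real.sqrt (n+1) + 1 := by linarith
  have hflat : ∀ n, N0 ≤ n → ∀ z : ℂ, ‖z‖ = 1 →
      Real.sqrt ((n:ℝ)+1) / 2 ≤ ‖(p n).eval z‖ := by
    intro n hn z hz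
    have hzexp : z = Complex.exp ((z.arg : ℂ) * Complex.I) := by
      conv_lhs => rw [← Complex.norm_mul_exp_arg_mul_I z]
      rw [show ((‖z‖ : ℝ) : ℂ) = 1 by rw [hz]; norm_num]
      rw [one_mul]
    have hS := hN0 n hn
    rw [Real.dist_eq, sub_zero] at hS
    have hS2 : (⨆ t : ℝ, |‖∑ j ∈ Finset.range (n + 1), a j * Complex.exp (t * Complex.I) ^ j‖ /
        Real.sqrt (n + 1) - 1|) < 1/2 := lt_of_le_of_lt (le_abs_self _) hS
    have hpt := le_ciSup (hbdd n) z.arg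
    have hlt : |‖∑ j ∈ Finset.range (n + 1), a j * Complex.exp ((z.arg : ℂ) * Complex.I) ^ j‖ /
        Real.sqrt (n + 1) - 1| < 1/2 := lt_of_le_of_lt hpt hS2
    have hsq : 0 < Real.sqrt ((n:ℝ)+1) := Real.sqrt_pos.mpr (by positivity)
    rw [abs_lt] at hlt
    have h3 : 1/2 < ‖∑ j ∈ Finset.range (n + 1), a j * Complex.exp ((z.arg : ℂ) * Complex.I) ^ j‖ /
        Real.sqrt (n + 1) := by linarith [hlt.1]
    rw [div_lt_div_iff₀ (by norm_num) hsq] at h3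
    have h4 : ‖(p n).eval z‖ = ‖∑ j ∈ Finset.range (n + 1),
        a j * Complex.exp ((z.arg : ℂ) * Complex.I) ^ j‖ := by
      rw [heval]
      congr 1
      rw [← hzexp]
    rw [h4]
    have hcast : Real.sqrt ((n:ℝ)+1) = Real.sqrt ((n:ℝ)+1) := rfl
    linarith
  -- set up the constants
  set N := max N0 4 with hN
  have hNN0 : N0 ≤ N := le_max_left _ _
  have hN4 : 4 ≤ N := le_max_right _ _
  have hne1 : ∀ n, N ≤ n → ∀ r ∈ (p n).roots, ‖r‖ ≠ 1 := by
    intro n hn r hr h1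
    have h2 := hflat n (hNN0.trans hn) r h1
    have h3 := (Polynomial.mem_roots'.mp hr).2
    rw [Polynomial.IsRoot] at h3
    rw [h3, norm_zero] at h2
    have hsq : 0 < Real.sqrt ((n:ℝ)+1) := Real.sqrt_pos.mpr (by positivity)
    linarith
  set W : ℕ → ℕ := fun n => Multiset.card ((p n).roots.filter fun r => ‖r‖ < 1) with hW
  have hprod1 : ∀ n, (((p n).roots).map fun r => ‖r‖).prod ≤ 1 := by
    intro n
    have h0 : (p n).eval 0 = a 0 := by
      rw [heval]
      rw [Finset.sum_eq_single_of_mem 0 (Finset.mem_range.mpr (Nat.succ_pos n))]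
      · simp
      · intro b _ hb
        simp [zero_pow hb]
    have h1 : ‖(p n).eval 0‖ = 1 := by rw [h0]; exact ha 0
    rw [hfac] at h1
    rw [norm_cprod, ha n, one_mul] at h1
    have h2 : ((p n).roots.map fun r => ‖(0:ℂ) - r‖).prod
        = ((p n).roots.map fun r => ‖r‖).prod :=
      congrArg Multiset.prod (Multiset.map_congr rfl fun r _ => by simp)
    rw [h2] at h1
    exact le_of_eq h1
  have hgrow : ∀ n, N ≤ n → Real.sqrt ((n:ℝ)+1) / 2 ≤ 4 ^ (W n) := by
    intro n hn
    apply growth (a n) (ha n) ((p n).roots) (hne1 n hn) (fun r hr => hhalf n r hr) (hprod1 n)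
    intro z hz
    rw [← hfac]
    exact hflat n (hNN0.trans hn) z hz
  have hWeq : ∀ n, N ≤ n → W (n+1) = W n := by
    intro n hn
    apply winding_eq (a n) (a (n+1)) ((p n).roots) ((p (n+1)).roots) (hne1 n hn)
      (hne1 (n+1) (hn.trans (Nat.le_succ n)))
    intro z hz
    rw [← hfac, ← hfac]
    have hdiff : (p (n+1)).eval z - (p n).eval z = a (n+1) * z^(n+1) := by
      rw [heval, heval, Finset.sum_range_succ]
      ring
    rw [hdiff]
    have h1 : ‖a (n+1) * z^(n+1)‖ = 1 := by
      rw [norm_mul, norm_pow, ha, hz]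
      simp
    rw [h1]
    have h2 : (2:ℝ) < Real.sqrt ((n:ℝ)+1) := by
      rw [show (2:ℝ) = Real.sqrt 4 by
        rw [show (4:ℝ) = 2^2 by norm_num, Real.sqrt_sq (by norm_num)]]
      apply Real.sqrt_lt_sqrt (by norm_num)
      have : (4:ℕ) ≤ n := le_trans hN4 hn
      have : (4:ℝ) ≤ (n:ℝ) := by exact_mod_cast this
      linarith
    have h3 := hflat n (hNN0.trans hn) z hz
    linarith
  have hWconst : ∀ n, N ≤ n → W n = W N := by
    intro n hn
    induction n, hn using Nat.le_induction with
    | base => rfl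
    | succ n hn ih => rw [hWeq n hn, ih]
  -- final contradiction
  set K : ℝ := 2 * 4 ^ (W N) with hK
  have hKpos : 0 < K := by positivity
  set n₀ : ℕ := max N (Nat.ceil (K^2)) with hn₀
  have hn₀N : N ≤ n₀ := le_max_left _ _
  have hceil : (Nat.ceil (K^2) : ℕ) ≤ n₀ := le_max_right _ _
  have hlt : K < Real.sqrt ((n₀:ℝ)+1) := by
    rw [Real.lt_sqrt (le_of_lt hKpos)]
    have h1 : K^2 ≤ (Nat.ceil (K^2) : ℝ) := Nat.le_ceil _
    have h2 : ((Nat.ceil (K^2) : ℕ) : ℝ) ≤ (n₀ : ℝ) := by exact_mod_cast hceil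
    linarith
  have hle : Real.sqrt ((n₀:ℝ)+1) ≤ K := by
    have h1 := hgrow n₀ hn₀N
    rw [hWconst n₀ hn₀N] at h1
    rw [hK]
    linarith
  linarith
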